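/- Let V and Q be real Hilbert spaces, a : V × V → ℝ a symmetric bilinear form with a(v,v) = ‖v‖_V² for all v ∈ V, c : V × V → ℝ a bilinear form with |c(u,v)| ≤ c₀·‖u‖_V·‖v‖_V for all u,v ∈ V, where 0 ≤ c₀ < 1 is a constant, and b : V × Q → ℝ a bilinear form with |b(v,q)| ≤ ‖v‖_V·‖q‖_Q for all v, q, satisfying the inf-sup condition with constant β > 0. Then for every continuous linear functional g on V there exists a unique pair (v,p) ∈ V × Q such that a(v,φ) + c(v,φ) + b(φ,p) = g(φ) for all φ ∈ V and b(v,q) = 0 for all q ∈ Q; moreover ‖v‖_V ≤ (1−c₀)⁻¹·‖g‖_{V'} and ‖p‖_Q ≤ β⁻¹·(1 + (1+c₀)/(1−c₀))·‖g‖_{V'}. -/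

import Mathlib

/-!
Brezzi's argument. By polarization `a` is the inner product, so `a + c` is bounded by `1 + c₀`
and coercive with constant `1 - c₀`. Let `B : Q → V` represent `b`, i.e. `⟪B q, v⟫ = b v q`.
The inf-sup condition says `β ‖q‖ ≤ ‖B q‖`, so `B` has closed range and
`Z := (range B)ᗮ = {v | b v = 0}`. Lax–Milgram on `Z` gives `v`; the residual `g - (a + c) v`
vanishes on `Z`, hence is represented by an element of `Zᗮ = range B`, which is `B p`.
Testing the first equation with `φ = v` bounds `v`, and the inf-sup condition applied to
`b φ p = g φ - (a + c) v φ` bounds `p`; uniqueness is the `g = 0` case of these bounds.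
-/

open scoped RealInnerProductSpace
open InnerProductSpace

theorem ContinuousLinearMap.isClosed_range_of_mul_norm_le {𝕜 E F : Type*}
    [NontriviallyNormedField 𝕜] [NormedAddCommGroup E] [NormedSpace 𝕜 E] [CompleteSpace E]
    [NormedAddCommGroup F] [NormedSpace 𝕜 F] (T : E →L[𝕜] F) {β : ℝ} (hβ : 0 < β)
    (hT : ∀ x, β * ‖x‖ ≤ ‖T x‖) : IsClosed (T.range : Set F) := by
  have hanti : AntilipschitzWith ⟨β⁻¹, inv_nonneg.mpr hβ.le⟩ T :=
    T.antilipschitz_of_bound fun x => by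
      change ‖x‖ ≤ β⁻¹ * ‖T x‖
      rw [inv_mul_eq_div, le_div_iff₀ hβ, mul_comm]
      exact hT x
  exact hanti.isClosed_range T.uniformContinuous

theorem iSup_div_norm_le {E : Type*} [NormedAddCommGroup E] {f : E → ℝ} {M : ℝ} (hM : 0 ≤ M)
    (hf : ∀ v, f v ≤ M * ‖v‖) :
    ⨆ v : {v : E // v ≠ 0}, f v.1 / ‖v.1‖ ≤ M :=
  Real.iSup_le (fun v => (div_le_iff₀ (norm_pos_iff.mpr v.2)).mpr (hf v)) hM

section Hilbert

variable {V Q : Type*} [NormedAddCommGroup V] [InnerProductSpace ℝ V]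
  [NormedAddCommGroup Q] [InnerProductSpace ℝ Q]

theorem LinearMap.apply_eq_inner_of_symm_of_apply_self (a : V →ₗ[ℝ] V →ₗ[ℝ] ℝ)
    (ha_symm : ∀ u v, a u v = a v u) (ha_norm : ∀ v, a v v = ‖v‖ ^ 2) (u v : V) :
    a u v = ⟪u, v⟫_ℝ := by
  have h := ha_norm (u + v)
  simp only [map_add, LinearMap.add_apply, ha_norm, ha_symm v u] at h
  linarith [norm_add_sq_real u v]

theorem exists_inner_eq_of_bilin_bound [CompleteSpace Q] (b : V →ₗ[ℝ] Q →ₗ[ℝ] ℝ) (C : ℝ)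
    (hb : ∀ v q, |b v q| ≤ C * ‖v‖ * ‖q‖) : ∃ B : V →L[ℝ] Q, ∀ v q, ⟪B v, q⟫_ℝ = b v q :=
  ⟨(toDual ℝ Q).symm.toContinuousLinearEquiv.toContinuousLinearMap.comp
      (b.mkContinuous₂ C fun v q => by simpa only [Real.norm_eq_abs] using hb v q),
    fun _ _ => toDual_symm_apply⟩

theorem exists_inner_eq_of_eq_zero_on_orthogonal_range [CompleteSpace V] (T : Q →L[ℝ] V)
    (hT : IsClosed (T.range : Set V)) (f : V →L[ℝ] ℝ)
    (hf : ∀ v ∈ T.rangeᗮ, f v = 0) : ∃ q, ∀ v, ⟪T q, v⟫_ℝ = f v := by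
  have hR : (toDual ℝ V).symm f ∈ T.rangeᗮᗮ := fun v hv => by
    rw [real_inner_comm, toDual_symm_apply]
    exact hf v hv
  rw [Submodule.orthogonal_orthogonal_eq_closure, hT.submodule_topologicalClosure_eq] at hR
  obtain ⟨q, hq⟩ := hR
  exact ⟨q, fun v => by rw [ContinuousLinearMap.coe_coe] at hq; rw [hq, toDual_symm_apply]⟩

theorem IsCoercive.exists_forall_apply_eq [CompleteSpace V] {D : V →L[ℝ] V →L[ℝ] ℝ}
    (hD : IsCoercive D) (f : V →L[ℝ] ℝ) : ∃ u, ∀ φ, D u φ = f φ :=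
  ⟨hD.continuousLinearEquivOfBilin.symm ((toDual ℝ V).symm f), fun φ => by
    rw [← hD.continuousLinearEquivOfBilin_apply, ContinuousLinearEquiv.apply_symm_apply,
      toDual_symm_apply]⟩

theorem IsCoercive.bilinearComp_subtypeL {D : V →L[ℝ] V →L[ℝ] ℝ} (hD : IsCoercive D)
    (K : Submodule ℝ V) : IsCoercive (D.bilinearComp K.subtypeL K.subtypeL) := by
  obtain ⟨C, hC, hDC⟩ := hD
  exact ⟨C, hC, fun u => hDC u⟩

def LinearMap.SatisfiesInfSup (b : V →ₗ[ℝ] Q →ₗ[ℝ] ℝ) (β : ℝ) : Prop :=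
  ∀ q : Q, β * ‖q‖ ≤ ⨆ v : {v : V // v ≠ 0}, b v.1 q / ‖v.1‖

theorem LinearMap.SatisfiesInfSup.mul_norm_le {b : V →ₗ[ℝ] Q →ₗ[ℝ] ℝ} {β : ℝ}
    (hinfsup : b.SatisfiesInfSup β) {q : Q} {M : ℝ} (hM : 0 ≤ M) (hq : ∀ v, b v q ≤ M * ‖v‖) :
    β * ‖q‖ ≤ M :=
  (hinfsup q).trans (iSup_div_norm_le (f := fun v => b v q) hM hq)

theorem LinearMap.SatisfiesInfSup.eq_zero {b : V →ₗ[ℝ] Q →ₗ[ℝ] ℝ} {β : ℝ}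
    (hinfsup : b.SatisfiesInfSup β) (hβ : 0 < β) {q : Q} (hq : ∀ v, b v q = 0) : q = 0 := by
  have := hinfsup.mul_norm_le le_rfl fun v => by rw [hq, zero_mul]
  exact norm_le_zero_iff.mp (nonpos_of_mul_nonpos_right this hβ)

def IsSaddlePointSolution (d : V →ₗ[ℝ] V →ₗ[ℝ] ℝ) (b : V →ₗ[ℝ] Q →ₗ[ℝ] ℝ) (g : V →L[ℝ] ℝ)
    (v : V) (p : Q) : Prop :=
  (∀ φ : V, d v φ + b φ p = g φ) ∧ ∀ q : Q, b v q = 0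

namespace IsSaddlePointSolution

variable {d : V →ₗ[ℝ] V →ₗ[ℝ] ℝ} {b : V →ₗ[ℝ] Q →ₗ[ℝ] ℝ} {g : V →L[ℝ] ℝ} {v : V} {p : Q}

theorem sub {v' : V} {p' : Q} (h : IsSaddlePointSolution d b g v p)
    (h' : IsSaddlePointSolution d b g v' p') : IsSaddlePointSolution d b 0 (v - v') (p - p') :=
  ⟨fun φ => by simp only [map_sub, LinearMap.sub_apply, zero_apply]; linarith [h.1 φ, h'.1 φ],
   fun q => by simp only [map_sub, LinearMap.sub_apply, h.2 q, h'.2 q, sub_zero]⟩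

theorem norm_fst_le {α : ℝ} (hα : 0 < α) (hcoer : ∀ u, α * ‖u‖ ^ 2 ≤ d u u)
    (h : IsSaddlePointSolution d b g v p) : ‖v‖ ≤ α⁻¹ * ‖g‖ := by
  have henergy : α * ‖v‖ * ‖v‖ ≤ ‖g‖ * ‖v‖ := calc
    α * ‖v‖ * ‖v‖ ≤ d v v := by rw [mul_assoc, ← pow_two]; exact hcoer v
    _ = g v := by simpa only [h.2 p, add_zero] using h.1 v
    _ ≤ ‖g‖ * ‖v‖ := (le_abs_self _).trans (g.le_opNorm v)
  rw [inv_mul_eq_div, le_div_iff₀ hα, mul_comm]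
  rcases (norm_nonneg v).eq_or_lt with hv | hv
  · rw [← hv, mul_zero]; exact norm_nonneg g
  · exact le_of_mul_le_mul_right henergy hv

theorem norm_snd_le {α β M : ℝ} (hα : 0 < α) (hβ : 0 < β) (hcoer : ∀ u, α * ‖u‖ ^ 2 ≤ d u u)
    (hinfsup : b.SatisfiesInfSup β) (hM : 0 ≤ M) (hd_bdd : ∀ u w, |d u w| ≤ M * ‖u‖ * ‖w‖)
    (h : IsSaddlePointSolution d b g v p) : ‖p‖ ≤ β⁻¹ * (1 + M / α) * ‖g‖ := by
  have hp : β * ‖p‖ ≤ ‖g‖ + M * ‖v‖ := hinfsup.mul_norm_le (by positivity) fun φ => by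
    have hg := (le_abs_self _).trans (g.le_opNorm φ)
    have hd := neg_le_of_abs_le (hd_bdd v φ)
    linarith [h.1 φ]
  rw [mul_assoc, ← div_eq_inv_mul, le_div_iff₀ hβ, mul_comm]
  calc β * ‖p‖ ≤ ‖g‖ + M * ‖v‖ := hp
    _ ≤ ‖g‖ + M * (α⁻¹ * ‖g‖) := by gcongr; exact h.norm_fst_le hα hcoer
    _ = (1 + M / α) * ‖g‖ := by ring

end IsSaddlePointSolution

variable [CompleteSpace V] [CompleteSpace Q]
  {d : V →ₗ[ℝ] V →ₗ[ℝ] ℝ} {b : V →ₗ[ℝ] Q →ₗ[ℝ] ℝ} {M α C β : ℝ}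

theorem exists_isSaddlePointSolution (hd_bdd : ∀ u w, |d u w| ≤ M * ‖u‖ * ‖w‖) (hα : 0 < α)
    (hcoer : ∀ u, α * ‖u‖ ^ 2 ≤ d u u) (hb_bdd : ∀ v q, |b v q| ≤ C * ‖v‖ * ‖q‖) (hβ : 0 < β)
    (hinfsup : b.SatisfiesInfSup β) (g : V →L[ℝ] ℝ) : ∃ v p, IsSaddlePointSolution d b g v p := by
  obtain ⟨B, hB⟩ := exists_inner_eq_of_bilin_bound b.flip C fun q v => by
    simpa only [LinearMap.flip_apply, mul_right_comm] using hb_bdd v q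
  have hB_closed : IsClosed (B.range : Set V) := B.isClosed_range_of_mul_norm_le hβ fun q =>
    hinfsup.mul_norm_le (norm_nonneg _) fun v => hB q v ▸ real_inner_le_norm _ _
  set Z := B.rangeᗮ
  have hZ : ∀ v, v ∈ Z ↔ ∀ q, b v q = 0 := fun v => by
    simp only [Z, Submodule.mem_orthogonal, LinearMap.mem_range, forall_exists_index,
      forall_apply_eq_imp_iff, ContinuousLinearMap.coe_coe, hB, LinearMap.flip_apply]
  let D : V →L[ℝ] V →L[ℝ] ℝ := d.mkContinuous₂ M fun u w => by
    simpa only [Real.norm_eq_abs] using hd_bdd u w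
  have hD : IsCoercive D := ⟨α, hα, fun u => by rw [mul_assoc, ← pow_two]; exact hcoer u⟩
  obtain ⟨u, hu⟩ := (hD.bilinearComp_subtypeL Z).exists_forall_apply_eq (g.comp Z.subtypeL)
  obtain ⟨p, hp⟩ := exists_inner_eq_of_eq_zero_on_orthogonal_range B hB_closed (g - D u)
    fun φ hφ => sub_eq_zero.mpr (hu ⟨φ, hφ⟩).symm
  refine ⟨u, p, fun φ => ?_, (hZ u).1 u.2⟩
  have hbp : b φ p = g φ - d u φ := (hB p φ).symm.trans (hp φ)
  linarith

theorem existsUnique_isSaddlePointSolution (hd_bdd : ∀ u w, |d u w| ≤ M * ‖u‖ * ‖w‖)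
    (hα : 0 < α) (hcoer : ∀ u, α * ‖u‖ ^ 2 ≤ d u u) (hb_bdd : ∀ v q, |b v q| ≤ C * ‖v‖ * ‖q‖)
    (hβ : 0 < β) (hinfsup : b.SatisfiesInfSup β) (g : V →L[ℝ] ℝ) :
    ∃! vp : V × Q, IsSaddlePointSolution d b g vp.1 vp.2 := by
  obtain ⟨v, p, h⟩ := exists_isSaddlePointSolution hd_bdd hα hcoer hb_bdd hβ hinfsup g
  refine ⟨(v, p), h, fun ⟨v', p'⟩ h' => ?_⟩
  have hdiff := h'.sub h
  have hv : v' = v := by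
    simpa [sub_eq_zero] using hdiff.norm_fst_le hα hcoer
  subst hv
  have hp : p' = p := by
    refine sub_eq_zero.mp (hinfsup.eq_zero hβ fun φ => ?_)
    simpa using hdiff.1 φ
  rw [hp]

end Hilbert

/-- Well-posedness of the unsymmetric saddle-point problem (equation (23)
of the paper), where the Newton-linearized convection form `c` perturbs the
symmetric form `a` with relative bound `c₀ < 1`. -/
theorem wellposed_unsymmetric
    {V Q : Type*}
    [NormedAddCommGroup V] [InnerProductSpace ℝ V] [CompleteSpace V]
    [NormedAddCommGroup Q] [InnerProductSpace ℝ Q] [CompleteSpace Q]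
    (a c : V →ₗ[ℝ] V →ₗ[ℝ] ℝ) (b : V →ₗ[ℝ] Q →ₗ[ℝ] ℝ)
    (c₀ β : ℝ)
    (ha_symm : ∀ u v : V, a u v = a v u)
    (ha_norm : ∀ v : V, a v v = ‖v‖ ^ 2)
    (hc_bdd : ∀ u v : V, |c u v| ≤ c₀ * ‖u‖ * ‖v‖)
    (hc₀ : 0 ≤ c₀) (hc₁ : c₀ < 1)
    (hb_bdd : ∀ (v : V) (q : Q), |b v q| ≤ ‖v‖ * ‖q‖)
    (hβ : 0 < β)
    (hinfsup : ∀ q : Q, β * ‖q‖ ≤ ⨆ v : {v : V // v ≠ 0}, b v.1 q / ‖v.1‖) :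
    ∀ g : V →L[ℝ] ℝ,
      (∃! vp : V × Q,
        (∀ φ : V, a vp.1 φ + c vp.1 φ + b φ vp.2 = g φ) ∧ (∀ q : Q, b vp.1 q = 0)) ∧
      (∀ vp : V × Q,
        ((∀ φ : V, a vp.1 φ + c vp.1 φ + b φ vp.2 = g φ) ∧ (∀ q : Q, b vp.1 q = 0)) →
          ‖vp.1‖ ≤ (1 - c₀)⁻¹ * ‖g‖ ∧
          ‖vp.2‖ ≤ β⁻¹ * (1 + (1 + c₀) / (1 - c₀)) * ‖g‖) := by
  have ha := a.apply_eq_inner_of_symm_of_apply_self ha_symm ha_norm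
  have hd_bdd : ∀ u w, |(a + c) u w| ≤ (1 + c₀) * ‖u‖ * ‖w‖ := fun u w => calc
    |a u w + c u w| ≤ |a u w| + |c u w| := abs_add_le _ _
    _ ≤ ‖u‖ * ‖w‖ + c₀ * ‖u‖ * ‖w‖ :=
      add_le_add (ha u w ▸ abs_real_inner_le_norm u w) (hc_bdd u w)
    _ = (1 + c₀) * ‖u‖ * ‖w‖ := by ring
  have hcoer : ∀ u, (1 - c₀) * ‖u‖ ^ 2 ≤ (a + c) u u := fun u => by
    have := neg_le_of_abs_le (hc_bdd u u)
    rw [LinearMap.add_apply, LinearMap.add_apply, ha_norm]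
    linarith
  have hα : 0 < 1 - c₀ := sub_pos.mpr hc₁
  have hb_bdd' : ∀ v q, |b v q| ≤ 1 * ‖v‖ * ‖q‖ := fun v q => by rw [one_mul]; exact hb_bdd v q
  intro g
  exact ⟨existsUnique_isSaddlePointSolution hd_bdd hα hcoer hb_bdd' hβ hinfsup g,
    fun vp (h : IsSaddlePointSolution (a + c) b g vp.1 vp.2) => ⟨h.norm_fst_le hα hcoer,
      h.norm_snd_le hα hβ hcoer hinfsup (by linarith) hd_bdd⟩⟩
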